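/- One-step decrement bound: let w ∈ L^2([0,1]^2), c > 1, and suppose S, T ⊆ [0,1] are measurable sets of positive measure with ‖w‖_⊞ ≤ c (λ(S)λ(T))^{-1/2} |∫_{S×T} w|. Let a = ⟨w, 1_{S×T}⟩ / ‖1_{S×T}‖_2^2. Then ‖w − a·1_{S×T}‖_2^2 ≤ ‖w‖_2^2 − c^{-2} ‖w‖_⊞^2. -/

import Mathlib

open MeasureTheory Set

/-- The jumble norm of `u : [0,1]² → ℝ`. -/
noncomputable def jumbleNorm (u : ℝ × ℝ → ℝ) : ℝ :=
  sSup {r : ℝ | ∃ S T : Set ℝ, MeasurableSet S ∧ MeasurableSet T ∧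
    S ⊆ Icc 0 1 ∧ T ⊆ Icc 0 1 ∧ 0 < (volume S).toReal ∧ 0 < (volume T).toReal ∧
    r = |∫ p in S ×ˢ T, u p| / Real.sqrt ((volume S).toReal * (volume T).toReal)}

/-- The `L^2` norm of a function on `[0,1]²`. -/
noncomputable def l2Norm2 (u : ℝ × ℝ → ℝ) : ℝ :=
  (eLpNorm u 2 (volume.restrict (Icc 0 1 ×ˢ Icc 0 1))).toReal

/-!
In `L²`, subtracting from `w` its orthogonal projection onto the indicator `g = 1_{S×T}` lowers
the squared norm by exactly `⟨w, g⟩² / ‖g‖² = (∫_{S×T} w)² / (λ(S)λ(T))`, and the hypothesis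
says precisely that this quantity is at least `c⁻² ‖w‖_⊞²`.
-/

theorem norm_sub_inner_div_smul_sq {F : Type*} [NormedAddCommGroup F] [InnerProductSpace ℝ F]
    (x y : F) :
    ‖x - (inner ℝ y x / ‖y‖ ^ 2) • y‖ ^ 2 = ‖x‖ ^ 2 - inner ℝ y x ^ 2 / ‖y‖ ^ 2 := by
  rcases eq_or_ne y 0 with rfl | hy
  · simp
  rw [norm_sub_sq_real, inner_smul_right, norm_smul, mul_pow, Real.norm_eq_abs, sq_abs,
    real_inner_comm]
  field_simp
  ring

theorem toReal_eLpNorm_sub_proj_indicator_sq {α : Type*} [MeasurableSpace α] {μ : Measure α}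
    {w : α → ℝ} (hw : MemLp w 2 μ) {s : Set α} (hs : MeasurableSet s) (hμs : μ s ≠ ⊤) :
    (eLpNorm (fun x => w x - ((∫ y in s, w y ∂μ) / μ.real s) * s.indicator (fun _ => 1) x)
        2 μ).toReal ^ 2 =
      (eLpNorm w 2 μ).toReal ^ 2 - (∫ y in s, w y ∂μ) ^ 2 / μ.real s := by
  set W := hw.toLp w
  set G := indicatorConstLp 2 hs hμs (1 : ℝ)
  have hGW : inner ℝ G W = ∫ y in s, w y ∂μ := by
    rw [L2.inner_indicatorConstLp_one]
    exact integral_congr_ae (ae_restrict_of_ae hw.coeFn_toLp)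
  have hG : ‖G‖ ^ 2 = μ.real s := by
    rw [← real_inner_self_eq_norm_sq, L2.real_inner_indicatorConstLp_one_indicatorConstLp_one,
      inter_self]
  have hdiff (a : ℝ) : W - a • G =ᵐ[μ] fun x => w x - a * s.indicator (fun _ => 1) x := by
    filter_upwards [Lp.coeFn_sub W (a • G), Lp.coeFn_smul a G, hw.coeFn_toLp,
      indicatorConstLp_coeFn (p := 2) (hs := hs) (hμs := hμs) (c := (1:ℝ))] with x h1 h2 h3 h4
    rw [h1, Pi.sub_apply, h2, Pi.smul_apply, h3, h4, smul_eq_mul]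
  rw [← eLpNorm_congr_ae (hdiff _), ← Lp.norm_def, ← eLpNorm_congr_ae hw.coeFn_toLp,
    ← Lp.norm_def, ← hGW, ← hG]
  exact norm_sub_inner_div_smul_sq W G

theorem sq_div_le_of_le_mul_abs_div_sqrt {J c I m : ℝ} (hJ : 0 ≤ J) (hm : 0 ≤ m)
    (h : J ≤ c * (|I| / Real.sqrt m)) : 1 / c ^ 2 * J ^ 2 ≤ I ^ 2 / m := by
  have hsq : J ^ 2 ≤ c ^ 2 * (I ^ 2 / m) := by
    calc J ^ 2 ≤ (c * (|I| / Real.sqrt m)) ^ 2 := pow_le_pow_left₀ hJ h 2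
      _ = c ^ 2 * (I ^ 2 / m) := by rw [mul_pow, div_pow, sq_abs, Real.sq_sqrt hm]
  rcases eq_or_ne c 0 with rfl | hc
  · simpa using div_nonneg (sq_nonneg I) hm
  rw [one_div_mul_eq_div, div_le_iff₀' (by positivity)]
  exact hsq

theorem jumbleNorm_nonneg (u : ℝ × ℝ → ℝ) : 0 ≤ jumbleNorm u :=
  Real.sSup_nonneg fun _ ⟨_, _, _, _, _, _, _, _, hr⟩ => hr ▸ by positivity

theorem one_step_decrement_general (w : ℝ × ℝ → ℝ)
    (hw : MemLp w 2 (volume.restrict (Icc 0 1 ×ˢ Icc 0 1)))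
    (c : ℝ)
    (S T : Set ℝ) (hS : MeasurableSet S) (hT : MeasurableSet T)
    (hSsub : S ⊆ Icc 0 1) (hTsub : T ⊆ Icc 0 1)
    (hbig : jumbleNorm w ≤
      c * (|∫ p in S ×ˢ T, w p| / Real.sqrt ((volume S).toReal * (volume T).toReal))) :
    l2Norm2 (fun p => w p -
        ((∫ q in S ×ˢ T, w q) / ((volume S).toReal * (volume T).toReal)) *
          (S ×ˢ T).indicator (fun _ => (1:ℝ)) p) ^ 2 ≤
      l2Norm2 w ^ 2 - (1 / c ^ 2) * jumbleNorm w ^ 2 := by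
  set μ := volume.restrict (Icc (0:ℝ) 1 ×ˢ Icc (0:ℝ) 1)
  have : IsFiniteMeasure μ :=
    isFiniteMeasure_restrict.2 (isCompact_Icc.prod isCompact_Icc).measure_lt_top.ne
  have hsub : S ×ˢ T ⊆ Icc (0:ℝ) 1 ×ˢ Icc (0:ℝ) 1 := prod_mono hSsub hTsub
  have hμST : μ.real (S ×ˢ T) = (volume S).toReal * (volume T).toReal := by
    rw [measureReal_def, Measure.restrict_apply (hS.prod hT), inter_eq_self_of_subset_left hsub,
      Measure.volume_eq_prod, Measure.prod_prod, ENNReal.toReal_mul]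
  have hI : ∫ p in S ×ˢ T, w p ∂μ = ∫ p in S ×ˢ T, w p := by
    rw [Measure.restrict_restrict_of_subset hsub]
  have hproj := toReal_eLpNorm_sub_proj_indicator_sq hw (hS.prod hT) (measure_ne_top μ _)
  rw [hI, hμST] at hproj
  rw [l2Norm2, l2Norm2, hproj]
  gcongr
  exact sq_div_le_of_le_mul_abs_div_sqrt (jumbleNorm_nonneg w) (by positivity) hbig

/-- One-step decrement bound in the proof of the weak regularity lemma. -/
theorem one_step_decrement (w : ℝ × ℝ → ℝ)
    (hw : MemLp w 2 (volume.restrict (Icc 0 1 ×ˢ Icc 0 1)))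
    (c : ℝ) (hc : 1 < c)
    (S T : Set ℝ) (hS : MeasurableSet S) (hT : MeasurableSet T)
    (hSsub : S ⊆ Icc 0 1) (hTsub : T ⊆ Icc 0 1)
    (hSpos : 0 < (volume S).toReal) (hTpos : 0 < (volume T).toReal)
    (hbig : jumbleNorm w ≤
      c * (|∫ p in S ×ˢ T, w p| / Real.sqrt ((volume S).toReal * (volume T).toReal))) :
    l2Norm2 (fun p => w p -
        ((∫ q in S ×ˢ T, w q) / ((volume S).toReal * (volume T).toReal)) *
          (S ×ˢ T).indicator (fun _ => (1:ℝ)) p) ^ 2 ≤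
      l2Norm2 w ^ 2 - (1 / c ^ 2) * jumbleNorm w ^ 2 :=
  one_step_decrement_general w hw c S T hS hT hSsub hTsub hbig
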